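/- Every 3×3 complex matrix of rank 2 can be written as a product of at most 4 Toeplitz matrices. -/

import Mathlib

def IsToeplitz {n : ℕ} (M : Matrix (Fin n) (Fin n) ℂ) : Prop :=
  ∀ (i j : Fin n) (hi : (i : ℕ) + 1 < n) (hj : (j : ℕ) + 1 < n),
    M i j = M ⟨i + 1, hi⟩ ⟨j + 1, hj⟩

/-!
A singular `M` has a nonzero left null vector `w`. There is an invertible Toeplitz `T` whose
inverse `S` has last row proportional to `w`, so `R = S * M` has zero last row and `M = T * R`.
Then `R = N * X` for the nilpotent shift `N` (a Toeplitz matrix) and any `X` whose last two rows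
are the first two rows of `R`; when the last column of `M` is nonzero, such an `X` can be taken
to be a product of two Toeplitz matrices, giving `M = T * N * T₂ * T₃`. Rank two forces the
first or the last column of `M` to be nonzero, and reversing the order of rows and columns
maps Toeplitz matrices to Toeplitz matrices, so the last column may be assumed nonzero.
-/

open Matrix

def IsToeplitzProduct {n : ℕ} (k : ℕ) (M : Matrix (Fin n) (Fin n) ℂ) : Prop :=
  ∃ L : List (Matrix (Fin n) (Fin n) ℂ), L.length ≤ k ∧ (∀ T ∈ L, IsToeplitz T) ∧ L.prod = M

section Reversal

variable {n : ℕ}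

theorem IsToeplitz.submatrix_rev {T : Matrix (Fin n) (Fin n) ℂ} (hT : IsToeplitz T) :
    IsToeplitz (T.submatrix Fin.rev Fin.rev) := by
  intro i j hi hj
  have key := hT (Fin.rev ⟨i + 1, hi⟩) (Fin.rev ⟨j + 1, hj⟩) (by simp; omega) (by simp; omega)
  simp only [submatrix_apply]
  convert key.symm using 2 <;> ext <;> simp <;> omega

theorem IsToeplitzProduct.submatrix_rev {k : ℕ} {M : Matrix (Fin n) (Fin n) ℂ}
    (hM : IsToeplitzProduct k M) : IsToeplitzProduct k (M.submatrix Fin.rev Fin.rev) := by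
  obtain ⟨L, hlen, hT, rfl⟩ := hM
  let φ := reindexAlgEquiv ℂ ℂ (Fin.revPerm : Equiv.Perm (Fin n))
  have hφ (T : Matrix (Fin n) (Fin n) ℂ) : φ T = T.submatrix Fin.rev Fin.rev := rfl
  refine ⟨L.map φ, by simpa using hlen, ?_, by rw [← hφ, map_list_prod]⟩
  simp only [List.mem_map]
  rintro _ ⟨T, hTL, rfl⟩
  exact (hT T hTL).submatrix_rev

theorem isToeplitzProduct_submatrix_rev_iff {k : ℕ} {M : Matrix (Fin n) (Fin n) ℂ} :
    IsToeplitzProduct k (M.submatrix Fin.rev Fin.rev) ↔ IsToeplitzProduct k M :=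
  ⟨fun h => by
    simpa only [submatrix_submatrix, Fin.rev_involutive.comp_self, submatrix_id_id] using
      h.submatrix_rev,
  IsToeplitzProduct.submatrix_rev⟩

end Reversal

theorem col_two_ne_zero_or_col_zero_ne_zero_of_two_le_rank {M : Matrix (Fin 3) (Fin 3) ℂ}
    (hM : 2 ≤ M.rank) :
    (∃ i, M i 2 ≠ 0) ∨ ∃ i, M i 0 ≠ 0 := by
  by_contra! h
  have hMD : M = M * diagonal ![0, 1, 0] := by
    ext i j
    fin_cases j <;> simp [h.1, h.2]
  have hD : (diagonal ![(0 : ℂ), 1, 0]).rank = 1 := by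
    rw [rank_diagonal, Fintype.card_eq_one_iff]
    refine ⟨⟨1, by simp⟩, ?_⟩
    rintro ⟨i, hi⟩
    fin_cases i <;> simp at hi ⊢
  have := calc M.rank = (M * diagonal ![0, 1, 0]).rank := by rw [← hMD]
    _ ≤ 1 := hD ▸ rank_mul_le_right _ _
  omega

theorem isToeplitz_fin_three (a b c d e : ℂ) : IsToeplitz !![a, b, c; d, a, b; e, d, a] := by
  intro i j hi hj
  fin_cases i <;> fin_cases j <;> first | rfl | simp at hi hj

def shiftUp : Matrix (Fin 3) (Fin 3) ℂ := !![0, 1, 0; 0, 0, 1; 0, 0, 0]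

theorem isToeplitz_shiftUp : IsToeplitz shiftUp := isToeplitz_fin_three 0 1 0 0 0

theorem exists_isToeplitz_mul_eq_one_row_two_eq_smul {w : Fin 3 → ℂ} (hw : w ≠ 0) :
    ∃ T S : Matrix (Fin 3) (Fin 3) ℂ, IsToeplitz T ∧ T * S = 1 ∧ ∃ c : ℂ, S 2 = c • w := by
  rcases ne_or_eq (w 2) 0 with h2 | h2
  · set x := w 1 / w 2
    set y := w 0 / w 2
    refine ⟨!![1, 0, 0; -x, 1, 0; x * x - y, -x, 1], !![1, 0, 0; x, 1, 0; y, x, 1],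
      isToeplitz_fin_three _ _ _ _ _, ?_, (w 2)⁻¹, ?_⟩
    · ext i j
      fin_cases i <;> fin_cases j <;> simp [mul_apply, Fin.sum_univ_three, one_apply]
      ring
    · ext j
      fin_cases j <;> simp [x, y] <;> field_simp
  rcases ne_or_eq (w 1) 0 with h1 | h1
  · set t := w 0 / w 1
    refine ⟨!![-t, 1, 0; t * t, -t, 1; 1 - t * t * t, t * t, -t],
      !![0, t, 1; 1, t * t, t; t, 1, 0], isToeplitz_fin_three _ _ _ _ _, ?_, (w 1)⁻¹, ?_⟩
    · ext i j
      fin_cases i <;> fin_cases j <;> simp [mul_apply, Fin.sum_univ_three, one_apply] <;> ring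
    · ext j
      fin_cases j <;> simp [t, h2] <;> field_simp
  have h0 : w 0 ≠ 0 := fun h0 => hw (funext fun j => by fin_cases j <;> assumption)
  refine ⟨!![0, 0, 1; 1, 0, 0; 0, 1, 0], !![0, 1, 0; 0, 0, 1; 1, 0, 0],
    isToeplitz_fin_three _ _ _ _ _, ?_, (w 0)⁻¹, ?_⟩
  · ext i j
    fin_cases i <;> fin_cases j <;> simp [mul_apply, Fin.sum_univ_three, one_apply]
  · ext j
    fin_cases j <;> simp [h1, h2, h0]

theorem exists_isToeplitz_shiftUp_mul_mul_eq {R : Matrix (Fin 3) (Fin 3) ℂ} (hR : R 2 = 0)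
    (hcol : R 0 2 ≠ 0 ∨ R 1 2 ≠ 0) :
    ∃ T₂ T₃ : Matrix (Fin 3) (Fin 3) ℂ,
      IsToeplitz T₂ ∧ IsToeplitz T₃ ∧ shiftUp * (T₂ * T₃) = R := by
  rcases ne_or_eq (R 1 2) (R 0 1) with hα | h12
  · set α := R 1 2 - R 0 1
    set q := R 1 1 - R 0 0
    have hα0 : α ≠ 0 := sub_ne_zero.mpr hα
    obtain ⟨δ, hδ⟩ : ∃ δ, R 0 2 = δ * α + q := ⟨(R 0 2 - q) / α, by field_simp; ring⟩
    set p := R 0 1 - δ * q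
    set s := R 0 0 - δ * p
    refine ⟨!![1, 0, 0; δ, 1, 0; 1, δ, 1], !![p, q, α; s, p, q; R 1 0 - p - δ * s, s, p],
      isToeplitz_fin_three _ _ _ _ _, isToeplitz_fin_three _ _ _ _ _, ?_⟩
    ext i j
    fin_cases i <;> fin_cases j <;>
      simp [shiftUp, mul_apply, Fin.sum_univ_three, hR, hδ, α, q, p, s]
  rcases ne_or_eq (R 0 2) 0 with h02 | h02
  · obtain ⟨ε, hε⟩ : ∃ ε, R 1 1 = ε * R 0 2 + R 0 0 :=
      ⟨(R 1 1 - R 0 0) / R 0 2, by field_simp; ring⟩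
    refine ⟨!![1, 0, 0; 0, 1, 0; ε, 0, 1],
      !![R 0 1, R 0 2, 0; R 0 0, R 0 1, R 0 2; R 1 0 - ε * R 0 1, R 0 0, R 0 1],
      isToeplitz_fin_three _ _ _ _ _, isToeplitz_fin_three _ _ _ _ _, ?_⟩
    ext i j
    fin_cases i <;> fin_cases j <;> simp [shiftUp, mul_apply, Fin.sum_univ_three, hR, hε, h12]
  · have h01 : R 0 1 ≠ 0 := by simpa [h02, h12] using hcol
    obtain ⟨ε, hε⟩ : ∃ ε, R 1 1 = ε * R 0 1 + R 0 0 :=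
      ⟨(R 1 1 - R 0 0) / R 0 1, by field_simp; ring⟩
    set u := R 1 0 - ε * R 0 0
    refine ⟨!![0, 0, 0; 1, 0, 0; ε, 1, 0], !![R 0 0, R 0 1, 0; u, R 0 0, R 0 1; 0, u, R 0 0],
      isToeplitz_fin_three _ _ _ _ _, isToeplitz_fin_three _ _ _ _ _, ?_⟩
    ext i j
    fin_cases i <;> fin_cases j <;>
      simp [shiftUp, mul_apply, Fin.sum_univ_three, hR, hε, h12, h02, u]

theorem isToeplitzProduct_four_of_det_eq_zero {M : Matrix (Fin 3) (Fin 3) ℂ} (hdet : M.det = 0)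
    (hcol : ∃ i, M i 2 ≠ 0) : IsToeplitzProduct 4 M := by
  obtain ⟨w, hw, hwM⟩ := exists_vecMul_eq_zero_iff.mpr hdet
  obtain ⟨T, S, hT, hTS, c, hS⟩ := exists_isToeplitz_mul_eq_one_row_two_eq_smul hw
  have hM : M = T * (S * M) := by rw [← Matrix.mul_assoc, hTS, Matrix.one_mul]
  have hR : (S * M) 2 = 0 := by rw [mul_apply_eq_vecMul, hS, smul_vecMul, hwM, smul_zero]
  have hRcol : (S * M) 0 2 ≠ 0 ∨ (S * M) 1 2 ≠ 0 := by
    obtain ⟨i, hi⟩ := hcol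
    by_contra! h
    rw [hM, mul_apply, Fin.sum_univ_three, h.1, h.2, congrFun hR 2] at hi
    simp at hi
  obtain ⟨T₂, T₃, hT₂, hT₃, hR'⟩ := exists_isToeplitz_shiftUp_mul_mul_eq hR hRcol
  refine ⟨[T, shiftUp, T₂, T₃], by simp, ?_, by simp [hR', ← hM]⟩
  simp only [List.mem_cons, List.not_mem_nil, or_false]
  rintro _ (rfl | rfl | rfl | rfl)
  exacts [hT, isToeplitz_shiftUp, hT₂, hT₃]

theorem rank_two_3x3_product_of_at_most_four_toeplitz
    (M : Matrix (Fin 3) (Fin 3) ℂ) (hM : M.rank = 2) :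
    ∃ L : List (Matrix (Fin 3) (Fin 3) ℂ),
      L.length ≤ 4 ∧ (∀ T ∈ L, IsToeplitz T) ∧ L.prod = M := by
  have hdet : M.det = 0 := by
    by_contra h
    simp [rank_of_det_ne_zero h] at hM
  change IsToeplitzProduct 4 M
  rcases col_two_ne_zero_or_col_zero_ne_zero_of_two_le_rank hM.ge with hcol | ⟨i, hi⟩
  · exact isToeplitzProduct_four_of_det_eq_zero hdet hcol
  · have hdet' : (M.submatrix Fin.rev Fin.rev).det = 0 :=
      (det_submatrix_equiv_self Fin.revPerm M).trans hdet
    rw [← isToeplitzProduct_submatrix_rev_iff]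
    exact isToeplitzProduct_four_of_det_eq_zero hdet' ⟨i.rev, by simpa using hi⟩
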